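/- Let H_S ∈ ℂ^{N_r×m} have rank L with compact SVD H_S = U Σ V*, and let H̃_S = [H_S, h] for a column h lying in the column space of U. Writing a = U* h, the L-th largest singular value satisfies 0 ≤ σ_L(H̃_S)² − σ_L(H_S)² ≤ |a_L|². -/

import Mathlib

open Matrix

/-- The `k`-th largest value of a finite real tuple. -/
noncomputable def kthLargest {n : ℕ} (f : Fin n → ℝ) (k : Fin n) : ℝ :=
  f (Tuple.sort f k.rev)

/-- The square of the `k`-th largest singular value of `A`, i.e. the `k`-th largest
eigenvalue of `A Aᴴ`. -/
noncomputable def kthSingularValueSq {m n : ℕ} (A : Matrix (Fin m) (Fin n) ℂ)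
    (k : Fin m) : ℝ :=
  kthLargest (Matrix.isHermitian_mul_conjTranspose_self A).eigenvalues k

/-!
With `D = Σ²`, the compact SVD gives `H_S H_Sᴴ = U D Uᴴ` and `H̃_S H̃_Sᴴ = U (D + a aᴴ) Uᴴ`.
For a positive semidefinite `L × L` matrix `M`, the spectrum of `U M Uᴴ` is that of `M` padded
with `N_r - L` zeros, so the `L`-th largest eigenvalue of `U M Uᴴ` is the least eigenvalue of `M`.
For `M = D` and `M = D + a aᴴ` this least eigenvalue is squeezed between `σ_L²`, since
`σ_L² • 1 ≤ D ≤ D + a aᴴ` in the Loewner order, and the diagonal entry `M_LL`, which is `σ_L²`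
resp. `σ_L² + |a_L|²`.
-/

open Polynomial
open scoped MatrixOrder ComplexOrder

theorem kthLargest_eq_getElem_sort {n : ℕ} (f : Fin n → ℝ) (k : Fin n) :
    kthLargest f k = ((Finset.univ.val.map f).sort (· ≥ ·))[(k : ℕ)]'(by simp) := by
  have hperm : (List.ofFn (kthLargest f)).Perm (List.ofFn f) :=
    Equiv.Perm.ofFn_comp_perm (Fin.revPerm.trans (Tuple.sort f)) f
  have hsort : (Finset.univ.val.map f).sort (· ≥ ·) = List.ofFn (kthLargest f) := by
    rw [Fin.univ_val_map, ← Multiset.coe_eq_coe.mpr hperm, Multiset.coe_sort]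
    exact List.mergeSort_eq_self _
      ((Tuple.monotone_sort f).comp_antitone Fin.rev_anti).sortedGE_ofFn.pairwise
  simp only [hsort, List.getElem_ofFn]

theorem kthLargest_castLE_of_map_eq_add_replicate {n L : ℕ} (hLn : L ≤ n) {f : Fin n → ℝ}
    {g : Fin L → ℝ} (hg : ∀ i, 0 ≤ g i)
    (hfg : Finset.univ.val.map f = Finset.univ.val.map g + Multiset.replicate (n - L) 0)
    (k : Fin L) : kthLargest f (Fin.castLE hLn k) = kthLargest g k := by
  set s := (Finset.univ.val.map g).sort (· ≥ ·)
  have hsort : (Finset.univ.val.map f).sort (· ≥ ·) = s ++ List.replicate (n - L) 0 := by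
    have hcoe : Finset.univ.val.map f = ((s ++ List.replicate (n - L) 0 : List ℝ) :
        Multiset ℝ) := by
      rw [hfg, ← Multiset.coe_add, Multiset.sort_eq, Multiset.coe_replicate]
    rw [hcoe, Multiset.coe_sort]
    refine List.mergeSort_eq_self _
      (List.pairwise_append.mpr ⟨Multiset.pairwise_sort _ _, ?_, ?_⟩)
    · exact List.pairwise_replicate.mpr (Or.inr le_rfl)
    · intro x hx y hy
      obtain ⟨i, -, rfl⟩ := Multiset.mem_map.mp ((Multiset.mem_sort _).mp hx)
      rw [List.eq_of_mem_replicate hy]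
      exact hg i
  rw [kthLargest_eq_getElem_sort, kthLargest_eq_getElem_sort]
  simp only [hsort, Fin.val_castLE]
  exact List.getElem_append_left _

theorem kthLargest_last_le {n : ℕ} (hn : 0 < n) (f : Fin n → ℝ) (i : Fin n) :
    kthLargest f ⟨n - 1, Nat.sub_one_lt_of_lt hn⟩ ≤ f i := by
  have hrev : (⟨n - 1, Nat.sub_one_lt_of_lt hn⟩ : Fin n).rev = ⟨0, hn⟩ := by
    ext; simp [Fin.val_rev]; omega
  unfold kthLargest
  rw [hrev]
  have hmin := Tuple.monotone_sort f
    (show (⟨0, hn⟩ : Fin n) ≤ (Tuple.sort f).symm i from Nat.zero_le _)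
  rwa [Function.comp_apply, Function.comp_apply, Equiv.apply_symm_apply] at hmin

section Hermitian

variable {𝕜 : Type*} [RCLike 𝕜]

theorem Matrix.IsHermitian.algebraMap_le_iff_le_eigenvalues {n : Type*} [Fintype n]
    [DecidableEq n] {A : Matrix n n 𝕜} (hA : A.IsHermitian) (c : ℝ) :
    algebraMap ℝ (Matrix n n 𝕜) c ≤ A ↔ ∀ i, c ≤ hA.eigenvalues i := by
  rw [algebraMap_le_iff_le_spectrum hA.isSelfAdjoint, hA.spectrum_real_eq_range_eigenvalues]
  simp

theorem Matrix.algebraMap_le_diagonal_ofReal {n : Type*} [Fintype n] [DecidableEq n] {c : ℝ}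
    {d : n → ℝ} (h : ∀ i, c ≤ d i) :
    algebraMap ℝ (Matrix n n 𝕜) c ≤ diagonal (fun i => (d i : 𝕜)) := by
  rw [Matrix.le_iff, algebraMap_eq_diagonal, diagonal_sub, posSemidef_diagonal_iff]
  intro i
  simpa only [Pi.sub_apply, Pi.algebraMap_apply, RCLike.algebraMap_eq_ofReal,
    ← RCLike.ofReal_sub, RCLike.ofReal_nonneg, sub_nonneg] using h i

theorem Matrix.le_re_diag_of_algebraMap_le {n : Type*} [Fintype n] [DecidableEq n]
    {A : Matrix n n 𝕜} {c : ℝ} (h : algebraMap ℝ (Matrix n n 𝕜) c ≤ A) (i : n) :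
    c ≤ RCLike.re (A i i) := by
  have hdiag := (Matrix.le_iff.mp h).diag_nonneg (i := i)
  rw [RCLike.nonneg_iff] at hdiag
  simpa [algebraMap_matrix_apply] using hdiag.1

theorem Matrix.IsHermitian.eigenvalues_map_conj_isometry {m n : Type*} [Fintype m]
    [DecidableEq m] [Fintype n] [DecidableEq n] {A : Matrix n n 𝕜} (hA : A.IsHermitian)
    {U : Matrix n m 𝕜} (hU : Uᴴ * U = 1) {M : Matrix m m 𝕜} (hM : M.IsHermitian)
    (hAM : A = U * M * Uᴴ) (hmn : Fintype.card m ≤ Fintype.card n) :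
    Finset.univ.val.map hA.eigenvalues = Finset.univ.val.map hM.eigenvalues +
      Multiset.replicate (Fintype.card n - Fintype.card m) 0 := by
  have hchar : A.charpoly = X ^ (Fintype.card n - Fintype.card m) * M.charpoly := by
    rw [hAM, charpoly_mul_comm_of_le _ _ hmn, ← Matrix.mul_assoc, hU, Matrix.one_mul]
  have hroots := congrArg Polynomial.roots hchar
  rw [hA.roots_charpoly_eq_eigenvalues, roots_mul ((monic_X_pow _).mul M.charpoly_monic).ne_zero,
    roots_X_pow, hM.roots_charpoly_eq_eigenvalues, Multiset.nsmul_singleton] at hroots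
  apply Multiset.map_injective (RCLike.ofReal_injective (K := 𝕜))
  simpa [Multiset.map_map, Multiset.map_replicate, add_comm] using hroots

theorem Matrix.IsHermitian.kthLargest_eigenvalues_conj_isometry {n L : ℕ}
    {A : Matrix (Fin n) (Fin n) 𝕜} (hA : A.IsHermitian) (hLn : L ≤ n)
    {U : Matrix (Fin n) (Fin L) 𝕜} (hU : Uᴴ * U = 1) {M : Matrix (Fin L) (Fin L) 𝕜}
    (hM : M.IsHermitian) (hM₀ : ∀ i, 0 ≤ hM.eigenvalues i) (hAM : A = U * M * Uᴴ)
    (k : Fin L) :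
    kthLargest hA.eigenvalues (Fin.castLE hLn k) = kthLargest hM.eigenvalues k :=
  kthLargest_castLE_of_map_eq_add_replicate hLn hM₀
    (by simpa using hA.eigenvalues_map_conj_isometry hU hM hAM (by simpa using hLn)) k

theorem Matrix.IsHermitian.kthLargest_eigenvalues_conj_isometry_mem_Icc {n L : ℕ}
    {A : Matrix (Fin n) (Fin n) 𝕜} (hA : A.IsHermitian) (hL : 0 < L) (hLn : L ≤ n)
    {U : Matrix (Fin n) (Fin L) 𝕜} (hU : Uᴴ * U = 1) {M : Matrix (Fin L) (Fin L) 𝕜}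
    (hM : M.IsHermitian) {c : ℝ} (hc : 0 ≤ c) (hcM : algebraMap ℝ _ c ≤ M)
    (hAM : A = U * M * Uᴴ) (l : Fin L) :
    kthLargest hA.eigenvalues ⟨L - 1, (Nat.sub_one_lt_of_lt hL).trans_le hLn⟩ ∈
      Set.Icc c (RCLike.re (M l l)) := by
  have hc_le := (hM.algebraMap_le_iff_le_eigenvalues c).mp hcM
  rw [show (⟨L - 1, _⟩ : Fin n) = Fin.castLE hLn ⟨L - 1, Nat.sub_one_lt_of_lt hL⟩ from rfl,
    hA.kthLargest_eigenvalues_conj_isometry hLn hU hM (fun i => hc.trans (hc_le i)) hAM]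
  refine ⟨hc_le _, Matrix.le_re_diag_of_algebraMap_le ?_ l⟩
  exact (hM.algebraMap_le_iff_le_eigenvalues _).mpr (kthLargest_last_le hL _)

theorem Matrix.self_mul_conjTranspose_of_eq_svd {m n p : Type*} [Fintype m] [Fintype p]
    [DecidableEq m] {U : Matrix n m 𝕜} {V : Matrix p m 𝕜} (hV : Vᴴ * V = 1) (s : m → ℝ)
    {A : Matrix n p 𝕜} (hA : A = U * diagonal (fun i => (s i : 𝕜)) * Vᴴ) :
    A * Aᴴ = U * diagonal (fun i => ((s i ^ 2 : ℝ) : 𝕜)) * Uᴴ := by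
  subst hA
  simp only [conjTranspose_mul, conjTranspose_conjTranspose, diagonal_conjTranspose,
    Matrix.mul_assoc]
  rw [← Matrix.mul_assoc Vᴴ, hV, Matrix.one_mul, ← Matrix.mul_assoc (diagonal _),
    diagonal_mul_diagonal]
  simp [sq]

theorem Matrix.conj_vecMulVec_self_star {m n : Type*} [Fintype m] (U : Matrix n m 𝕜)
    (a : m → 𝕜) : U * vecMulVec a (star a) * Uᴴ = vecMulVec (U *ᵥ a) (star (U *ᵥ a)) := by
  rw [mul_vecMulVec, vecMulVec_mul, star_mulVec]

end Hermitian

theorem Matrix.snoc_col_mul_conjTranspose_self {α : Type*} [NonUnitalNonAssocSemiring α]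
    [StarRing α] {m : Type*} {k : ℕ} (A : Matrix m (Fin k) α) (v : m → α) :
    (of fun i => Fin.snoc (A i) (v i)) * (of fun i => Fin.snoc (A i) (v i))ᴴ =
      A * Aᴴ + vecMulVec v (star v) := by
  ext i j
  simp [Matrix.mul_apply, Fin.sum_univ_castSucc, vecMulVec_apply]

/-- Appending to a rank-`L` matrix `H_S = U Σ V*` a column `h = U a` lying in its column
space increases the squared `L`-th largest singular value by at most `|a_L|²`. -/
theorem sigmaL_sq_increase_bound
    {Nr m L : ℕ} (hL : 0 < L) (hLNr : L ≤ Nr)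
    (HS : Matrix (Fin Nr) (Fin m) ℂ)
    (U : Matrix (Fin Nr) (Fin L) ℂ) (V : Matrix (Fin m) (Fin L) ℂ) (σ : Fin L → ℝ)
    (hU : Uᴴ * U = 1) (hV : Vᴴ * V = 1)
    (hσpos : ∀ i, 0 < σ i) (hσdec : ∀ i j : Fin L, i ≤ j → σ j ≤ σ i)
    (hSVD : HS = U * Matrix.diagonal (fun i => (σ i : ℂ)) * Vᴴ)
    (h : Fin Nr → ℂ) (a : Fin L → ℂ)
    (hcol : h = U *ᵥ a)
    (Htilde : Matrix (Fin Nr) (Fin (m + 1)) ℂ)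
    (hHt : Htilde = Matrix.of fun i => Fin.snoc (HS i) (h i)) :
    0 ≤ kthSingularValueSq Htilde ⟨L - 1, by omega⟩
          - kthSingularValueSq HS ⟨L - 1, by omega⟩ ∧
      kthSingularValueSq Htilde ⟨L - 1, by omega⟩
          - kthSingularValueSq HS ⟨L - 1, by omega⟩
        ≤ ‖a ⟨L - 1, by omega⟩‖ ^ 2 := by
  set l : Fin L := ⟨L - 1, by omega⟩
  set D : Matrix (Fin L) (Fin L) ℂ := diagonal fun i => ((σ i ^ 2 : ℝ) : ℂ)
  have hD : D.IsHermitian := isHermitian_diagonal_of_self_adjoint _ (by ext; simp)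
  have hDa : (D + vecMulVec a (star a)).IsHermitian :=
    hD.add (posSemidef_vecMulVec_self_star a).isHermitian
  have hD_ge : algebraMap ℝ _ (σ l ^ 2) ≤ D := algebraMap_le_diagonal_ofReal fun i =>
    pow_le_pow_left₀ (hσpos l).le (hσdec i l (Nat.le_sub_one_of_lt i.2)) 2
  have hDa_ge : algebraMap ℝ _ (σ l ^ 2) ≤ D + vecMulVec a (star a) :=
    hD_ge.trans (le_add_of_nonneg_right (posSemidef_vecMulVec_self_star a).nonneg)
  have hHS : HS * HSᴴ = U * D * Uᴴ := self_mul_conjTranspose_of_eq_svd hV σ hSVD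
  have hHt : Htilde * Htildeᴴ = U * (D + vecMulVec a (star a)) * Uᴴ := by
    rw [hHt, snoc_col_mul_conjTranspose_self, hHS, hcol, Matrix.mul_add, Matrix.add_mul,
      conj_vecMulVec_self_star]
  obtain ⟨hHS_ge, hHS_le⟩ := (isHermitian_mul_conjTranspose_self HS)
    |>.kthLargest_eigenvalues_conj_isometry_mem_Icc hL hLNr hU hD (sq_nonneg _) hD_ge hHS l
  obtain ⟨hHt_ge, hHt_le⟩ := (isHermitian_mul_conjTranspose_self Htilde)
    |>.kthLargest_eigenvalues_conj_isometry_mem_Icc hL hLNr hU hDa (sq_nonneg _) hDa_ge hHt l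
  have hD_diag : RCLike.re (D l l) = σ l ^ 2 := by
    simp only [D, diagonal_apply_eq, RCLike.re_to_complex, Complex.ofReal_re]
  have hDa_diag : RCLike.re ((D + vecMulVec a (star a)) l l) = σ l ^ 2 + ‖a l‖ ^ 2 := by
    simp only [D, Matrix.add_apply, diagonal_apply_eq, vecMulVec_apply, Pi.star_apply,
      RCLike.star_def, RCLike.mul_conj, RCLike.re_to_complex, Complex.add_re, Complex.ofReal_re]
    norm_cast
  unfold kthSingularValueSq
  constructor <;> linarith
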